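/- Let f : ℝ → ℂ be a bounded continuous function on ℝ that extends continuously to the closed upper half-plane and holomorphically to the open upper half-plane. If f vanishes identically on the real interval (-∞, -1/ε) for some ε > 0, then f vanishes identically on ℝ. -/

import Mathlib

open Complex Set Filter Asymptotics ComplexConjugate

/-!
If `f` vanishes on `(-∞, a)`, the product `g z = f z * conj (f (2a - conj z))` of `f` with its
reflection in the line `re z = a` is still holomorphic, bounded and continuous up to the real
axis, and it vanishes on all of `ℝ`: each real point lies on one side of `a`, and the reflection
swaps the two sides. Rotated onto the right half-plane, Phragmén–Lindelöf with bound `0` on the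
imaginary axis gives `g = 0`. Holomorphic functions on the connected upper half-plane have no
zero divisors, so `f` or its reflection vanishes there, hence `f` does, and so does its continuous
extension to `ℝ`.
-/

theorem DiffContOnCl.conj_comp_sub_conj {f : ℂ → ℂ} (hf : DiffContOnCl ℂ f {z | 0 < z.im})
    (c : ℝ) : DiffContOnCl ℂ (fun z => conj (f (c - conj z))) {z | 0 < z.im} := by
  have hmaps : ∀ s : Set ℝ, MapsTo (fun z => (c : ℂ) - conj z) (im ⁻¹' s) (im ⁻¹' s) :=
    fun s z hz => by simpa using hz
  refine ⟨fun z hz => DifferentiableAt.differentiableWithinAt ?_, ?_⟩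
  · have hcf : DifferentiableAt ℂ (conj ∘ f ∘ conj) (c - z) :=
      differentiableAt_conj_conj_iff.mpr <| hf.differentiableAt (isOpen_lt continuous_const
        continuous_im) (by simpa using hmaps (Ioi 0) hz)
    convert hcf.comp z ((differentiableAt_const _).sub differentiableAt_id) using 1
    ext w
    simp
  · have hcont := hf.continuousOn
    rw [closure_setOfPred_lt_im] at hcont ⊢
    exact continuous_conj.comp_continuousOn <| hcont.comp (by fun_prop) (hmaps (Ici 0))

theorem PhragmenLindelof.eq_zero_on_upper_half_plane_of_bounded {E : Type*}
    [NormedAddCommGroup E] [NormedSpace ℂ E] {g : ℂ → E} (hd : DiffContOnCl ℂ g {z | 0 < z.im})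
    {C : ℝ} (hC : ∀ z : ℂ, 0 ≤ z.im → ‖g z‖ ≤ C) (hreal : ∀ x : ℝ, g x = 0) :
    EqOn g 0 {z | 0 ≤ z.im} := by
  set F : ℂ → E := fun w => g (I * w)
  have hF : DiffContOnCl ℂ F {w | 0 < w.re} :=
    hd.comp (differentiable_id.const_mul I).diffContOnCl fun w hw => by simpa using hw
  have hFC : ∀ w : ℂ, 0 ≤ w.re → ‖F w‖ ≤ C := fun w hw => hC _ (by simpa using hw)
  have hexp : ∃ c < (2 : ℝ), ∃ B, F =O[Bornology.cobounded ℂ ⊓ 𝓟 {w | 0 < w.re}]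
      fun w => Real.exp (B * ‖w‖ ^ c) := by
    refine ⟨0, two_pos, 0, IsBigO.of_bound C ?_⟩
    filter_upwards [mem_inf_of_right (mem_principal_self _)] with w hw
    simpa using hFC w hw.le
  have hre : IsBoundedUnder (· ≤ ·) atTop fun x : ℝ => ‖F x‖ :=
    isBoundedUnder_of_eventually_le <| by
      filter_upwards [eventually_ge_atTop 0] with x hx using hFC x (by simpa using hx)
  have him : ∀ x : ℝ, ‖F (x * I)‖ ≤ 0 := fun x => by
    simpa [F, mul_comm I, mul_assoc] using hreal (-x)
  intro z hz
  have := right_half_plane_of_bounded_on_real hF hexp hre him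
    (z := -I * z) (by simpa using hz)
  simpa [F, ← mul_assoc] using this

theorem eq_zero_on_upper_half_plane_of_bounded_of_eq_zero_on_Iio {f : ℂ → ℂ}
    (hd : DiffContOnCl ℂ f {z | 0 < z.im}) {C : ℝ} (hC : ∀ z : ℂ, 0 ≤ z.im → ‖f z‖ ≤ C) (a : ℝ)
    (hvanish : ∀ x : ℝ, x < a → f x = 0) :
    EqOn f 0 {z | 0 ≤ z.im} := by
  have hU : IsOpen {z : ℂ | 0 < z.im} := isOpen_lt continuous_const continuous_im
  have hcont : ContinuousOn f {z | 0 ≤ z.im} := closure_setOfPred_lt_im (0 : ℝ) ▸ hd.continuousOn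
  have hfa : ∀ x : ℝ, x ≤ a → f x = 0 := fun x hx =>
    EqOn.of_subset_closure (f := f ∘ ofReal) hvanish
      (hcont.comp_continuous continuous_ofReal fun _ => by simp).continuousOn
      continuousOn_const Iio_subset_Iic_self (closure_Iio a).ge hx
  set R : ℂ → ℂ := fun z => conj (f (2 * a - conj z))
  have hR : DiffContOnCl ℂ R {z | 0 < z.im} := by
    simpa [R] using hd.conj_comp_sub_conj (2 * a)
  have hprod : EqOn (f * R) 0 {z | 0 ≤ z.im} := by
    refine PhragmenLindelof.eq_zero_on_upper_half_plane_of_bounded (C := C * C) (hd.smul hR)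
      (fun z hz => ?_) (fun x => ?_)
    · have hRz : ‖R z‖ ≤ C := by simpa [R] using hC (2 * a - conj z) (by simpa using hz)
      simpa using mul_le_mul (hC z hz) hRz (norm_nonneg _) ((norm_nonneg _).trans hRz)
    · rcases le_or_gt x a with hx | hx
      · simp [hfa x hx]
      · have := hfa (2 * a - x) (by linarith)
        simp_all [R]
  have hfU : EqOn f 0 {z | 0 < z.im} := by
    rcases (hd.differentiableOn.analyticOnNhd hU).eq_zero_or_eq_zero_of_mul_eq_zero
      (hR.differentiableOn.analyticOnNhd hU) (fun z hz => hprod (le_of_lt hz : 0 ≤ z.im))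
      (convex_halfSpace_im_gt 0).isPreconnected with hf | hR0
    · exact hf
    · intro z hz
      simpa [R, map_ofNat] using hR0 (2 * a - conj z) (by simpa using hz)
  exact hfU.of_subset_closure hcont continuousOn_const
    (ofPred_subset_ofPred.mpr fun _ => le_of_lt) (closure_setOfPred_lt_im (0 : ℝ)).ge

theorem stmt1_general (f : ℂ → ℂ) (ε : ℝ)
    (hcont : ContinuousOn f {z : ℂ | 0 ≤ z.im})
    (hholo : DifferentiableOn ℂ f {z : ℂ | 0 < z.im})
    (hbdd : ∃ C : ℝ, ∀ z : ℂ, 0 ≤ z.im → ‖f z‖ ≤ C)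
    (hvanish : ∀ x : ℝ, x < -1 / ε → f x = 0) :
    ∀ x : ℝ, f x = 0 := by
  obtain ⟨C, hC⟩ := hbdd
  have hd : DiffContOnCl ℂ f {z | 0 < z.im} := ⟨hholo, by rwa [closure_setOfPred_lt_im]⟩
  exact fun x =>
    eq_zero_on_upper_half_plane_of_bounded_of_eq_zero_on_Iio hd hC (-1 / ε) hvanish (by simp)

/-- A bounded function, continuous on the closed upper half plane and
holomorphic on the open upper half plane, that vanishes on the real half line
`(-∞, -1/ε)` vanishes on all of `ℝ`. -/
theorem stmt1 (f : ℂ → ℂ) (ε : ℝ) (hε : 0 < ε)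
    (hcont : ContinuousOn f {z : ℂ | 0 ≤ z.im})
    (hholo : DifferentiableOn ℂ f {z : ℂ | 0 < z.im})
    (hbdd : ∃ C : ℝ, ∀ z : ℂ, 0 ≤ z.im → ‖f z‖ ≤ C)
    (hvanish : ∀ x : ℝ, x < -1 / ε → f x = 0) :
    ∀ x : ℝ, f x = 0 :=
  stmt1_general f ε hcont hholo hbdd hvanish
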